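/- Let $p \in [1,2]$, $A \in \mathbb{R}^{n \times d}$ with $\ell_p$ Lewis weights $w_i$, and let $k_i = \lceil w_i / (d/n) \rceil$. Form $A'$ by replacing each row $a_i$ with $k_i$ copies of $a_i / k_i^{1/p}$. Then each $\ell_p$ Lewis weight of $A'$ equals $w_i / k_i$ and is bounded by $d/n$. -/

import Mathlib

open Matrix

/-- The `ℓ_p` Lewis weights of `A`, as a predicate: positive weights satisfying the
fixed-point equation `wᵢ = (aᵢᵀ (Aᵀ W^{1-2/p} A)⁻¹ aᵢ)^{p/2}`. -/
def IsLewisWeights (p : ℝ) {m : Type*} [Fintype m] [DecidableEq m] {d : ℕ}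
    (A : Matrix m (Fin d) ℝ) (w : m → ℝ) : Prop :=
  (∀ i, 0 < w i) ∧
  ∀ i, w i =
    (A i ⬝ᵥ ((Aᵀ * Matrix.diagonal (fun t => w t ^ (1 - 2 / p)) * A)⁻¹).mulVec (A i))
      ^ (p / 2)

/-!
For `0 < p ≤ 2` the Lewis weights are unique. If `w ≤ t • v` with `t = maxᵢ wᵢ / vᵢ`, then
`1 - 2/p ≤ 0` gives `Aᵀ W^{1-2/p} A ≥ t^{1-2/p} Aᵀ V^{1-2/p} A` as quadratic forms; inverting
reverses this, so `w ≤ t^{1-p/2} • v`, and at the maximizing index this forces `t ≤ 1`.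

Splitting a row `aᵢ` into rows `γⱼ^{1/p} aᵢ` with `∑ⱼ γⱼ = 1` and its weight into `γⱼ wᵢ` leaves
the Gram matrix `Aᵀ W^{1-2/p} A` unchanged, because `γ^{1-2/p} (γ^{1/p})² = γ`. So the split
weights solve the fixed-point equation for `A'`, and by uniqueness they are its Lewis weights.
-/

namespace Matrix

variable {m ι : Type*} [Fintype m] [DecidableEq m]

lemma transpose_mul_diagonal_mul_apply (B : Matrix m ι ℝ) (u : m → ℝ) (s t : ι) :
    (Bᵀ * diagonal u * B) s t = ∑ r, u r * (B r s * B r t) := by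
  rw [mul_apply]
  simp only [mul_diagonal, transpose_apply]
  exact Finset.sum_congr rfl fun r _ => by ring

variable [Fintype ι]

lemma dotProduct_transpose_mul_diagonal_mul_mulVec (B : Matrix m ι ℝ) (u : m → ℝ)
    (x : ι → ℝ) : x ⬝ᵥ (Bᵀ * diagonal u * B) *ᵥ x = ∑ r, u r * (B *ᵥ x) r ^ 2 := by
  rw [← mulVec_mulVec, ← mulVec_mulVec, dotProduct_mulVec, vecMul_transpose]
  simp only [dotProduct, mulVec_diagonal]
  exact Finset.sum_congr rfl fun r _ => by ring

lemma posSemidef_transpose_mul_diagonal_mul (B : Matrix m ι ℝ) {u : m → ℝ}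
    (hu : ∀ r, 0 ≤ u r) : (Bᵀ * diagonal u * B).PosSemidef := by
  simpa [conjTranspose_eq_transpose_of_trivial] using
    (posSemidef_diagonal_iff.mpr hu).conjTranspose_mul_mul_same B

variable [DecidableEq ι] {M N : Matrix ι ι ℝ}

lemma mulVec_nonsing_inv_mulVec (hN : IsUnit N.det) (x : ι → ℝ) : N *ᵥ (N⁻¹ *ᵥ x) = x := by
  rw [mulVec_mulVec, mul_nonsing_inv _ hN, one_mulVec]

lemma PosDef.two_mul_dotProduct_sub_le (hN : N.PosDef) (x z : ι → ℝ) :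
    2 * (x ⬝ᵥ z) - z ⬝ᵥ N *ᵥ z ≤ x ⬝ᵥ N⁻¹ *ᵥ x := by
  set y := N⁻¹ *ᵥ x
  have hNy : N *ᵥ y = x := mulVec_nonsing_inv_mulVec ((isUnit_iff_isUnit_det _).mp hN.isUnit) x
  have hsymm : ∀ a b, a ⬝ᵥ N *ᵥ b = b ⬝ᵥ N *ᵥ a := fun a b => by
    rw [dotProduct_mulVec, ← mulVec_transpose, dotProduct_comm,
      ← conjTranspose_eq_transpose_of_trivial, hN.isHermitian.eq]
  have hsq : 0 ≤ (z - y) ⬝ᵥ N *ᵥ (z - y) := by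
    simpa using hN.posSemidef.dotProduct_mulVec_nonneg (z - y)
  have hexp : (z - y) ⬝ᵥ N *ᵥ (z - y) = z ⬝ᵥ N *ᵥ z - 2 * (x ⬝ᵥ z) + x ⬝ᵥ y := by
    simp only [mulVec_sub, dotProduct_sub, sub_dotProduct, hsymm y z, hNy, dotProduct_comm z x,
      dotProduct_comm y x]
    ring
  linarith

lemma PosDef.dotProduct_inv_mulVec_le (hM : M.PosDef) (hN : N.PosDef) {c : ℝ} (hc : 0 < c)
    (h : ∀ z, c * (z ⬝ᵥ M *ᵥ z) ≤ z ⬝ᵥ N *ᵥ z) (x : ι → ℝ) :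
    x ⬝ᵥ N⁻¹ *ᵥ x ≤ c⁻¹ * (x ⬝ᵥ M⁻¹ *ᵥ x) := by
  set y := N⁻¹ *ᵥ x
  have hNy : N *ᵥ y = x := mulVec_nonsing_inv_mulVec ((isUnit_iff_isUnit_det _).mp hN.isUnit) x
  calc x ⬝ᵥ y = 2 * (x ⬝ᵥ y) - y ⬝ᵥ N *ᵥ y := by rw [hNy, dotProduct_comm y x]; ring
    _ ≤ 2 * (x ⬝ᵥ y) - c * (y ⬝ᵥ M *ᵥ y) := by linarith [h y]
    _ = c⁻¹ * (2 * (x ⬝ᵥ c • y) - c • y ⬝ᵥ M *ᵥ (c • y)) := by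
      simp only [mulVec_smul, dotProduct_smul, smul_dotProduct, smul_eq_mul]
      field_simp
    _ ≤ c⁻¹ * (x ⬝ᵥ M⁻¹ *ᵥ x) := by
      gcongr
      exact hM.two_mul_dotProduct_sub_le x _

end Matrix

namespace IsLewisWeights

variable {p : ℝ} {m : Type*} [Fintype m] [DecidableEq m] {d : ℕ} {B : Matrix m (Fin d) ℝ}
  {w v : m → ℝ}

lemma posDef (hp : p ≠ 0) (hw : IsLewisWeights p B w) (i : m) :
    (Bᵀ * diagonal (fun t => w t ^ (1 - 2 / p)) * B).PosDef := by
  refine (posSemidef_transpose_mul_diagonal_mul B fun r => ?_).posDef_iff_isUnit.mpr ?_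
  · exact (Real.rpow_pos_of_pos (hw.1 r) _).le
  -- a singular Gram matrix has junk inverse `0`, which would force `w i = 0`
  by_contra hB
  have hwi := hw.2 i
  rw [nonsing_inv_apply_not_isUnit _ (mt (isUnit_iff_isUnit_det _).mpr hB), zero_mulVec,
    dotProduct_zero, Real.zero_rpow (div_ne_zero hp two_ne_zero)] at hwi
  exact (hw.1 i).ne' hwi

lemma le_rpow_mul_of_le_mul (hp0 : 0 < p) (hp2 : p ≤ 2) (hw : IsLewisWeights p B w)
    (hv : IsLewisWeights p B v) {t : ℝ} (ht : 0 < t) (hwv : ∀ r, w r ≤ t * v r) (i : m) :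
    w i ≤ t ^ (1 - p / 2) * v i := by
  have hq : 1 - 2 / p ≤ 0 := by
    rw [sub_nonpos, le_div_iff₀ hp0]
    linarith
  have hgram : ∀ z,
      t ^ (1 - 2 / p) * (z ⬝ᵥ (Bᵀ * diagonal (fun r => v r ^ (1 - 2 / p)) * B) *ᵥ z)
        ≤ z ⬝ᵥ (Bᵀ * diagonal (fun r => w r ^ (1 - 2 / p)) * B) *ᵥ z := by
    intro z
    simp only [dotProduct_transpose_mul_diagonal_mul_mulVec, Finset.mul_sum, ← mul_assoc]
    refine Finset.sum_le_sum fun r _ => mul_le_mul_of_nonneg_right ?_ (sq_nonneg _)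
    rw [← Real.mul_rpow ht.le (hv.1 r).le]
    exact Real.rpow_le_rpow_of_nonpos (hw.1 r) (hwv r) hq
  have hM := hv.posDef hp0.ne' i
  calc w i = (B i ⬝ᵥ (Bᵀ * diagonal (fun r => w r ^ (1 - 2 / p)) * B)⁻¹ *ᵥ B i) ^ (p / 2) :=
        hw.2 i
    _ ≤ ((t ^ (1 - 2 / p))⁻¹ *
          (B i ⬝ᵥ (Bᵀ * diagonal (fun r => v r ^ (1 - 2 / p)) * B)⁻¹ *ᵥ B i)) ^ (p / 2) := by
      gcongr
      · simpa using (hw.posDef hp0.ne' i).inv.posSemidef.dotProduct_mulVec_nonneg (B i)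
      · exact hM.dotProduct_inv_mulVec_le (hw.posDef hp0.ne' i) (by positivity) hgram _
    _ = t ^ (1 - p / 2) * v i := by
      rw [Real.mul_rpow (by positivity)
        (by simpa using hM.inv.posSemidef.dotProduct_mulVec_nonneg (B i)), ← hv.2 i,
        ← Real.rpow_neg ht.le, ← Real.rpow_mul ht.le]
      congr 2
      field_simp
      ring

lemma le (hp0 : 0 < p) (hp2 : p ≤ 2) (hw : IsLewisWeights p B w) (hv : IsLewisWeights p B v) :
    w ≤ v := by
  intro i
  obtain ⟨i₀, -, hmax⟩ :=
    Finset.exists_max_image Finset.univ (fun r => w r / v r) ⟨i, Finset.mem_univ i⟩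
  set t := w i₀ / v i₀
  have ht : 0 < t := div_pos (hw.1 i₀) (hv.1 i₀)
  have hwv : ∀ r, w r ≤ t * v r := fun r =>
    (div_le_iff₀ (hv.1 r)).mp (hmax r (Finset.mem_univ r))
  have ht1 : t ≤ 1 := by
    have h := hw.le_rpow_mul_of_le_mul hp0 hp2 hv ht hwv i₀
    rw [← div_le_iff₀ (hv.1 i₀)] at h
    by_contra! h1
    have := Real.rpow_lt_rpow_of_exponent_lt h1 (show 1 - p / 2 < 1 by linarith)
    rw [Real.rpow_one] at this
    linarith
  calc w i ≤ t * v i := hwv i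
    _ ≤ v i := mul_le_of_le_one_left (hv.1 i).le ht1

lemma unique (hp0 : 0 < p) (hp2 : p ≤ 2) (hw : IsLewisWeights p B w) (hv : IsLewisWeights p B v) :
    w = v :=
  le_antisymm (hw.le hp0 hp2 hv) (hv.le hp0 hp2 hw)

lemma split {κ : m → Type*} [∀ i, Fintype (κ i)] [∀ i, DecidableEq (κ i)] (hp : p ≠ 0)
    (hw : IsLewisWeights p B w) {γ : (Σ i, κ i) → ℝ} (hγ : ∀ s, 0 < γ s)
    (hγ_sum : ∀ i, ∑ j, γ ⟨i, j⟩ = 1) {B' : Matrix (Σ i, κ i) (Fin d) ℝ}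
    (hB' : ∀ s, B' s = γ s ^ (1 / p) • B s.1) :
    IsLewisWeights p B' fun s => γ s * w s.1 := by
  have hγ_sq : ∀ s, γ s ^ (1 / p) * γ s ^ (1 / p) = γ s ^ (2 / p) := fun s => by
    rw [← Real.rpow_add (hγ s)]
    ring_nf
  have hgram : B'ᵀ * diagonal (fun s => (γ s * w s.1) ^ (1 - 2 / p)) * B'
      = Bᵀ * diagonal (fun r => w r ^ (1 - 2 / p)) * B := by
    ext a b
    rw [transpose_mul_diagonal_mul_apply, transpose_mul_diagonal_mul_apply,
      ← Finset.univ_sigma_univ, Finset.sum_sigma]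
    refine Finset.sum_congr rfl fun i _ => ?_
    have hterm : ∀ j, (γ ⟨i, j⟩ * w i) ^ (1 - 2 / p) * (B' ⟨i, j⟩ a * B' ⟨i, j⟩ b)
        = γ ⟨i, j⟩ * (w i ^ (1 - 2 / p) * (B i a * B i b)) := fun j => by
      have hγ_one : γ ⟨i, j⟩ ^ (1 - 2 / p) * γ ⟨i, j⟩ ^ (2 / p) = γ ⟨i, j⟩ := by
        rw [← Real.rpow_add (hγ _), sub_add_cancel, Real.rpow_one]
      rw [hB', Real.mul_rpow (hγ _).le (hw.1 i).le]
      simp only [Pi.smul_apply, smul_eq_mul]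
      linear_combination (w i ^ (1 - 2 / p) * B i a * B i b) *
        (γ ⟨i, j⟩ ^ (1 - 2 / p) * hγ_sq ⟨i, j⟩ + hγ_one)
    simp only [hterm, ← Finset.sum_mul, hγ_sum, one_mul]
  refine ⟨fun s => mul_pos (hγ s) (hw.1 s.1), fun s => ?_⟩
  have hx : 0 ≤ B s.1 ⬝ᵥ (Bᵀ * diagonal (fun r => w r ^ (1 - 2 / p)) * B)⁻¹ *ᵥ B s.1 := by
    simpa using ((posSemidef_transpose_mul_diagonal_mul B fun r =>
      (Real.rpow_pos_of_pos (hw.1 r) _).le).inv.dotProduct_mulVec_nonneg (B s.1))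
  simp only [hgram, hB', smul_dotProduct, mulVec_smul, dotProduct_smul, smul_eq_mul, ← mul_assoc,
    hγ_sq]
  rw [Real.mul_rpow (Real.rpow_pos_of_pos (hγ s) _).le hx, ← hw.2, ← Real.rpow_mul (hγ s).le,
    div_mul_div_cancel₀' two_ne_zero, div_self hp, Real.rpow_one]

end IsLewisWeights

theorem stmt_17_general {n d : ℕ} (hn : 0 < n) (hd : 0 < d)
    (p : ℝ) (hp1 : 1 ≤ p) (hp2 : p ≤ 2)
    (A : Matrix (Fin n) (Fin d) ℝ)
    (w : Fin n → ℝ) (hw : IsLewisWeights p A w)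
    (k : Fin n → ℕ) (hk : ∀ i, k i = ⌈w i / ((d : ℝ) / n)⌉₊)
    (A' : Matrix ((i : Fin n) × Fin (k i)) (Fin d) ℝ)
    (hA' : ∀ (i : Fin n) (j : Fin (k i)) (l : Fin d),
      A' ⟨i, j⟩ l = A i l / (k i : ℝ) ^ ((1 : ℝ) / p))
    (w' : (i : Fin n) × Fin (k i) → ℝ) (hw' : IsLewisWeights p A' w') :
    ∀ (i : Fin n) (j : Fin (k i)),
      w' ⟨i, j⟩ = w i / k i ∧ w' ⟨i, j⟩ ≤ (d : ℝ) / n := by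
  have hp0 : 0 < p := by linarith
  have hdn : 0 < (d : ℝ) / n := by positivity
  have hk_pos : ∀ i, 0 < (k i : ℝ) := fun i => by
    rw [hk i, Nat.cast_pos, Nat.ceil_pos]
    exact div_pos (hw.1 i) hdn
  have hsplit : IsLewisWeights p A' fun s => (k s.1 : ℝ)⁻¹ * w s.1 := by
    refine hw.split hp0.ne' (fun s => inv_pos.mpr (hk_pos s.1))
      (fun i => by simp [(hk_pos i).ne']) ?_
    rintro ⟨i, j⟩
    funext l
    rw [hA', Real.inv_rpow (hk_pos i).le, Pi.smul_apply, smul_eq_mul, div_eq_inv_mul]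
  rw [hw'.unique hp0 hp2 hsplit]
  refine fun i j => ⟨inv_mul_eq_div _ _, ?_⟩
  dsimp only
  rw [inv_mul_eq_div, div_le_iff₀ (hk_pos i), ← div_le_iff₀' hdn, hk i]
  exact Nat.le_ceil _

/-- Flattening: replacing row `aᵢ` by `kᵢ = ⌈wᵢ/(d/n)⌉` copies of `aᵢ/kᵢ^{1/p}` gives a
matrix whose Lewis weights equal `wᵢ/kᵢ` and are all at most `d/n`. -/
theorem stmt_17 {n d : ℕ} (hn : 0 < n) (hd : 0 < d)
    (p : ℝ) (hp1 : 1 ≤ p) (hp2 : p ≤ 2)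
    (A : Matrix (Fin n) (Fin d) ℝ) (hA : A.rank = d)
    (w : Fin n → ℝ) (hw : IsLewisWeights p A w)
    (k : Fin n → ℕ) (hk : ∀ i, k i = ⌈w i / ((d : ℝ) / n)⌉₊)
    (A' : Matrix ((i : Fin n) × Fin (k i)) (Fin d) ℝ)
    (hA' : ∀ (i : Fin n) (j : Fin (k i)) (l : Fin d),
      A' ⟨i, j⟩ l = A i l / (k i : ℝ) ^ ((1 : ℝ) / p))
    (w' : (i : Fin n) × Fin (k i) → ℝ) (hw' : IsLewisWeights p A' w') :
    ∀ (i : Fin n) (j : Fin (k i)),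
      w' ⟨i, j⟩ = w i / k i ∧ w' ⟨i, j⟩ ≤ (d : ℝ) / n :=
  stmt_17_general hn hd p hp1 hp2 A w hw k hk A' hA' w' hw'
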